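/- Let (X, ≤) be a chain-complete partially ordered set and let f : X → X be chain-continuous. Then f preserves least upper bounds of nonempty directed sets: for every nonempty subset D ⊆ X that is directed with respect to ≤ and every x that is a least upper bound of D, f x is a least upper bound of the image f '' D. -/

import Mathlib

/-!
Markowsky's argument, by induction on the cardinality of the directed set `D`.
A countable directed set has a cofinal increasing sequence, which is a chain with the same upper
bounds as `D`. An uncountable one is the union of an increasing family of directed subsets of
smaller cardinality (Iwamura): well-order `D` in type `#D`, and close each initial segment under a
chosen upper-bound operation. By induction `f` preserves the suprema of the pieces; these suprema
form a chain with the same upper bounds as `D`, and chain continuity applies to it.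
-/

open Cardinal Set

namespace Set

variable {α : Type*} (g : α → α → α)

def binaryClosure (S : Set α) : Set α :=
  ⋃ n : ℕ, (fun T ↦ T ∪ image2 g T T)^[n] S

variable {g}

theorem subset_binaryClosure (S : Set α) : S ⊆ binaryClosure g S :=
  subset_iUnion (fun n ↦ (fun T ↦ T ∪ image2 g T T)^[n] S) 0

theorem binaryClosure_mono : Monotone (binaryClosure g) := fun _ _ h ↦
  iUnion_mono fun n ↦ Monotone.iterate (fun _ _ h ↦ union_subset_union h (image2_subset h h)) n h

theorem apply_mem_binaryClosure {S : Set α} {a b : α} (ha : a ∈ binaryClosure g S)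
    (hb : b ∈ binaryClosure g S) : g a b ∈ binaryClosure g S := by
  have hstep : Monotone fun n ↦ (fun T ↦ T ∪ image2 g T T)^[n] :=
    Function.monotone_iterate_of_id_le fun _ ↦ subset_union_left
  obtain ⟨m, ha⟩ := mem_iUnion.1 ha
  obtain ⟨n, hb⟩ := mem_iUnion.1 hb
  refine mem_iUnion.2 ⟨max m n + 1, ?_⟩
  rw [Function.iterate_succ_apply']
  exact Or.inr (mem_image2_of_mem (hstep (le_max_left m n) S ha) (hstep (le_max_right m n) S hb))

theorem binaryClosure_subset {S D : Set α} (hD : ∀ a ∈ D, ∀ b ∈ D, g a b ∈ D) (hS : S ⊆ D) :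
    binaryClosure g S ⊆ D := by
  refine iUnion_subset fun n ↦ ?_
  induction n with
  | zero => exact hS
  | succ n ih =>
    rw [Function.iterate_succ_apply']
    exact union_subset ih (image2_subset_iff.2 fun a ha b hb ↦ hD a (ih ha) b (ih hb))

theorem mk_binaryClosure_le (S : Set α) : #(binaryClosure g S) ≤ max #S ℵ₀ := by
  set m := max #S ℵ₀
  have hm : ℵ₀ ≤ m := le_max_right _ _
  have hstep : ∀ n, #((fun T ↦ T ∪ image2 g T T)^[n] S) ≤ m := by
    intro n
    induction n with
    | zero => exact le_max_left _ _
    | succ n ih =>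
      rw [Function.iterate_succ_apply']
      calc _ ≤ _ + #(image2 g _ _) := mk_union_le _ _
        _ ≤ m + m * m := add_le_add ih (mk_image2_le.trans (mul_le_mul' ih ih))
        _ = m := by rw [mul_eq_self hm, add_eq_self hm]
  calc #(binaryClosure g S) ≤ ℵ₀ * ⨆ n : ℕ, #((fun T ↦ T ∪ image2 g T T)^[n] S) := by
        simpa [binaryClosure] using
          mk_iUnion_le_lift.{_, 0} fun n ↦ (fun T ↦ T ∪ image2 g T T)^[n] S
    _ ≤ m * m := mul_le_mul' hm (ciSup_le' hstep)
    _ = m := mul_eq_self hm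

end Set

theorem isLUB_iff_of_subset_of_isCofinalFor {α : Type*} [Preorder α] {C D : Set α} (hCD : C ⊆ D)
    (hDC : IsCofinalFor D C) {a : α} : IsLUB C a ↔ IsLUB D a :=
  isLUB_congr (subset_antisymm (upperBounds_mono_of_isCofinalFor hDC) (upperBounds_mono_set hCD))

section Directed

variable {α : Type*} [Preorder α] {D : Set α}

theorem DirectedOn.exists_monotone_isCofinalFor (hD : DirectedOn (· ≤ ·) D) (hne : D.Nonempty)
    (hcount : D.Countable) : ∃ c : ℕ → α, Monotone c ∧ range c ⊆ D ∧ IsCofinalFor D (range c) := by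
  have := hcount.toEncodable
  have : Inhabited D := ⟨⟨_, hne.some_mem⟩⟩
  have hdir := directedOn_iff_directed.1 hD
  refine ⟨_, hdir.sequence_mono, range_subset_iff.2 fun n ↦ (hdir.sequence _ n).2, fun a ha ↦ ?_⟩
  exact ⟨_, mem_range_self _, hdir.le_sequence ⟨a, ha⟩⟩

theorem DirectedOn.exists_monotone_iUnion_eq_of_aleph0_lt (hD : DirectedOn (· ≤ ·) D)
    (hκ : ℵ₀ < #D) :
    ∃ A : (#D).ord.ToType → Set α, Monotone A ∧ ⋃ i, A i = D ∧
      ∀ i, (A i).Nonempty ∧ DirectedOn (· ≤ ·) (A i) ∧ #(A i) < #D := by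
  have : Nonempty α := ⟨(Cardinal.mk_ne_zero_iff.1 (aleph0_pos.trans hκ).ne').some⟩
  choose! g hgD hga hgb using hD
  obtain ⟨e⟩ : Nonempty ((#D).ord.ToType ≃ D) := Cardinal.eq.1 (mk_ord_toType _)
  set A := fun i ↦ binaryClosure g ((fun j ↦ (e j : α)) '' Iic i)
  have hAD : ∀ i, A i ⊆ D := fun i ↦
    binaryClosure_subset hgD (image_subset_iff.2 fun j _ ↦ (e j).2)
  refine ⟨A, fun i j hij ↦ binaryClosure_mono (image_mono (Iic_subset_Iic.2 hij)), ?_,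
    fun i ↦ ⟨?_, ?_, ?_⟩⟩
  · refine subset_antisymm (iUnion_subset hAD) fun a ha ↦ mem_iUnion.2 ⟨e.symm ⟨a, ha⟩, ?_⟩
    exact subset_binaryClosure _ ⟨_, self_mem_Iic, by simp⟩
  · exact ⟨_, subset_binaryClosure _ (mem_image_of_mem _ self_mem_Iic)⟩
  · intro a ha b hb
    exact ⟨g a b, apply_mem_binaryClosure ha hb, hga a (hAD i ha) b (hAD i hb),
      hgb a (hAD i ha) b (hAD i hb)⟩
  · have hIic : #(Iic i) < #D := by
      simpa using mk_Iic_lt i (by simp) (by simpa using hκ.le)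
    calc #(A i) ≤ max #((fun j ↦ (e j : α)) '' Iic i) ℵ₀ := mk_binaryClosure_le _
      _ < #D := max_lt (mk_image_le.trans_lt hIic) hκ

end Directed

def ChainComplete (α : Type*) [Preorder α] : Prop :=
  ∀ C : Set α, IsChain (· ≤ ·) C → ∃ s, IsLUB C s

def ChainContinuous {α β : Type*} [Preorder α] [Preorder β] (f : α → β) : Prop :=
  ∀ C : Set α, C.Nonempty → IsChain (· ≤ ·) C → ∀ x, IsLUB C x → IsLUB (f '' C) (f x)

namespace ChainContinuous

variable {α β : Type*} [PartialOrder α] [Preorder β] {f : α → β}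

theorem monotone (hf : ChainContinuous f) : Monotone f := by
  intro a b hab
  have hlub : IsLUB {a, b} b := IsGreatest.isLUB ⟨by simp, by simp [hab]⟩
  exact (hf _ (insert_nonempty a {b}) (.pair hab) b hlub).1 (mem_image_of_mem f (mem_insert a {b}))

theorem exists_isLUB_image_of_countable (hα : ChainComplete α) (hf : ChainContinuous f)
    {D : Set α} (hD : DirectedOn (· ≤ ·) D) (hne : D.Nonempty) (hcount : D.Countable) :
    ∃ s, IsLUB D s ∧ IsLUB (f '' D) (f s) := by
  obtain ⟨c, hc, hcD, hDc⟩ := hD.exists_monotone_isCofinalFor hne hcount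
  obtain ⟨s, hs⟩ := hα _ hc.isChain_range
  refine ⟨s, (isLUB_iff_of_subset_of_isCofinalFor hcD hDc).1 hs, ?_⟩
  have hfDc := hDc.image_of_monotone hf.monotone
  exact (isLUB_iff_of_subset_of_isCofinalFor (image_mono hcD) hfDc).1
    (hf _ (range_nonempty c) hc.isChain_range s hs)

theorem exists_isLUB_image_iUnion (hα : ChainComplete α) (hf : ChainContinuous f)
    {ι : Type*} [LinearOrder ι] [Nonempty ι] {A : ι → Set α} (hA : Monotone A)
    (hAf : ∀ i, ∃ s, IsLUB (A i) s ∧ IsLUB (f '' A i) (f s)) :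
    ∃ s, IsLUB (⋃ i, A i) s ∧ IsLUB (f '' ⋃ i, A i) (f s) := by
  choose t ht hft using hAf
  have ht_mono : Monotone t := fun i j hij ↦ (ht i).mono (ht j) (hA hij)
  obtain ⟨s, hs⟩ := hα _ ht_mono.isChain_range
  refine ⟨s, (isLUB_iUnion_iff_of_isLUB ht s).1 hs, ?_⟩
  rw [image_iUnion, ← isLUB_iUnion_iff_of_isLUB hft, range_comp']
  exact hf _ (range_nonempty t) ht_mono.isChain_range s hs

theorem exists_isLUB_image_of_directedOn (hα : ChainComplete α) (hf : ChainContinuous f)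
    {D : Set α} (hD : DirectedOn (· ≤ ·) D) (hne : D.Nonempty) :
    ∃ s, IsLUB D s ∧ IsLUB (f '' D) (f s) := by
  induction hcard : #D using WellFoundedLT.induction generalizing D with
  | _ κ ih =>
  rcases le_or_gt #D ℵ₀ with hcount | huncount
  · exact hf.exists_isLUB_image_of_countable hα hD hne
      (countable_coe_iff.1 (mk_le_aleph0_iff.1 hcount))
  · obtain ⟨A, hA, hAD, hAi⟩ := hD.exists_monotone_iUnion_eq_of_aleph0_lt huncount
    obtain ⟨i, -⟩ := nonempty_iUnion.1 (hAD ▸ hne)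
    have : Nonempty (#D).ord.ToType := ⟨i⟩
    rw [← hAD]
    exact hf.exists_isLUB_image_iUnion hα hA fun i ↦
      ih _ (hcard ▸ (hAi i).2.2) (hAi i).2.1 (hAi i).1 rfl

end ChainContinuous

/-- In a chain-complete poset, a chain-continuous map preserves least
upper bounds of nonempty directed sets. -/
theorem stmt_10 {X : Type*} [PartialOrder X]
    (hcc : ∀ C : Set X, IsChain (· ≤ ·) C → ∃ s, IsLUB C s)
    (f : X → X)
    (hcont : ∀ C : Set X, C.Nonempty → IsChain (· ≤ ·) C →
      ∀ x, IsLUB C x → IsLUB (f '' C) (f x)) :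
    ∀ D : Set X, D.Nonempty → DirectedOn (· ≤ ·) D →
      ∀ x, IsLUB D x → IsLUB (f '' D) (f x) := by
  intro D hne hD x hx
  obtain ⟨s, hs, hfs⟩ := ChainContinuous.exists_isLUB_image_of_directedOn hcc hcont hD hne
  rwa [hs.unique hx] at hfs
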